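/- (Joint scattering removes the relative-velocity singularity.) Fix v̄_i ∈ B_R and suppose (v_i, v_j) are the velocities after a collision parametrized by (v*, ν*) ∈ B_R × 𝕊¹, in either of the two forms: (v_i, v_j) = (v̄_i, v*) or v_i = v̄_i + ((v* - v̄_i)·ν*)ν*, v_j = v* - ((v* - v̄_i)·ν*)ν*. Then in both cases |v_i - v_j| = |v* - v̄_i|, and consequently ∫_{𝕊¹}∫_{B_R} |v_i - v_j|^{-1} |(v* - v̄_i)·ν*| dv* dν* ≤ C R². -/

import Mathlib

/-!
The post-collision relative velocity `v_i - v_j = 2⟪w, ν⟫ν - w`, with `w = v* - v̄_i`, is the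
reflection of `w` in the line `ℝν`, so it has the length of `w`. Since `|⟪w, ν⟫| ≤ ‖w‖`, the
integrand is then bounded by `1`, and the double integral by `|𝕊¹| · |B_R| = |𝕊¹| · |B_1| · R²`.
-/

open MeasureTheory Metric
open scoped RealInnerProductSpace

noncomputable section

/-- The plane `ℝ²`. -/
abbrev E2 : Type := EuclideanSpace ℝ (Fin 2)

/-- The surface measure on the unit circle `𝕊¹ ⊂ ℝ²`. -/
def sphμ : Measure (sphere (0 : E2) 1) := (volume : Measure E2).toSphere

section Collision

variable {E : Type*} [NormedAddCommGroup E] [InnerProductSpace ℝ E]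

theorem collision_sub_eq_reflection (vbar v ν : E) (hν : ‖ν‖ = 1) :
    (vbar + ⟪v - vbar, ν⟫ • ν) - (v - ⟪v - vbar, ν⟫ • ν) = (ℝ ∙ ν).reflection (v - vbar) := by
  rw [Submodule.reflection_singleton_apply, hν, real_inner_comm]
  module

theorem norm_collision_sub (vbar v ν : E) (hν : ‖ν‖ = 1) :
    ‖(vbar + ⟪v - vbar, ν⟫ • ν) - (v - ⟪v - vbar, ν⟫ • ν)‖ = ‖v - vbar‖ := by
  rw [collision_sub_eq_reflection vbar v ν hν, LinearIsometryEquiv.norm_map]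

theorem inv_norm_mul_abs_inner_le_one (w ν : E) (hν : ‖ν‖ = 1) : ‖w‖⁻¹ * |⟪w, ν⟫| ≤ 1 := by
  have hle : |⟪w, ν⟫| ≤ ‖w‖ := by
    simpa [hν] using abs_real_inner_le_norm w ν
  rcases (norm_nonneg w).eq_or_lt with hw | hw
  · simp [← hw]
  · exact inv_mul_le_one_of_le₀ hle hw.le

end Collision

theorem integral_setIntegral_le_of_norm_le_const {α β : Type*} [MeasurableSpace α]
    [MeasurableSpace β] (μ : Measure α) [IsFiniteMeasure μ] (ν : Measure β) {s : Set β}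
    (hs : ν s < ⊤) {f : α → β → ℝ} {C : ℝ} (hf : ∀ a, ∀ b ∈ s, ‖f a b‖ ≤ C) :
    ∫ a, ∫ b in s, f a b ∂ν ∂μ ≤ C * ν.real s * μ.real Set.univ :=
  (le_abs_self _).trans <| norm_integral_le_of_norm_le_const <|
    Filter.Eventually.of_forall fun a => norm_setIntegral_le_of_norm_le_const hs (hf a)

instance : IsFiniteMeasure sphμ := by
  unfold sphμ
  infer_instance

/-- Joint scattering removes the relative-velocity singularity: in both
collision forms `(v_i, v_j) = (v̄_i, v*)` and
`v_i = v̄_i + ((v*-v̄_i)·ν*)ν*`, `v_j = v* - ((v*-v̄_i)·ν*)ν*` one has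
`|v_i - v_j| = |v* - v̄_i|`, and consequently
`∫_{𝕊¹}∫_{B_R} |v_i - v_j|⁻¹ |(v* - v̄_i)·ν*| dv* dν* ≤ C R²`. -/
theorem statement13 :
    ∃ C : ℝ, 0 < C ∧
      ∀ (R : ℝ) (vbar : E2), 1 < R → ‖vbar‖ ≤ R →
        (∀ (v : E2) (ν : E2), ‖ν‖ = 1 →
          ‖vbar - v‖ = ‖v - vbar‖ ∧
          ‖(vbar + ⟪v - vbar, ν⟫ • ν) - (v - ⟪v - vbar, ν⟫ • ν)‖ = ‖v - vbar‖) ∧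
        (∫ ν : sphere (0 : E2) 1, ∫ v in Metric.ball (0 : E2) R,
            ‖(vbar + ⟪v - vbar, (ν : E2)⟫ • (ν : E2)) -
              (v - ⟪v - vbar, (ν : E2)⟫ • (ν : E2))‖⁻¹ * |⟪v - vbar, (ν : E2)⟫|
          ∂volume ∂sphμ)
          ≤ C * R ^ 2 := by
  set K := volume.real (ball (0 : E2) 1) * sphμ.real Set.univ
  refine ⟨K + 1, by positivity, fun R vbar hR _ => ⟨fun v ν hν =>
    ⟨norm_sub_rev _ _, norm_collision_sub vbar v ν hν⟩, ?_⟩⟩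
  have hbound : ∀ (ν : sphere (0 : E2) 1), ∀ v ∈ ball (0 : E2) R,
      ‖‖(vbar + ⟪v - vbar, (ν : E2)⟫ • (ν : E2)) - (v - ⟪v - vbar, (ν : E2)⟫ • (ν : E2))‖⁻¹ *
        |⟪v - vbar, (ν : E2)⟫|‖ ≤ 1 := by
    intro ν v _
    have hν : ‖(ν : E2)‖ = 1 := norm_eq_of_mem_sphere ν
    rw [norm_collision_sub vbar v ν hν, Real.norm_of_nonneg (by positivity)]
    exact inv_norm_mul_abs_inner_le_one _ _ hν
  calc _ ≤ 1 * volume.real (ball (0 : E2) R) * sphμ.real Set.univ :=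
        integral_setIntegral_le_of_norm_le_const _ _ measure_ball_lt_top hbound
    _ = K * R ^ 2 := by
        rw [← Measure.addHaar_real_closedBall_eq_addHaar_real_ball,
          Measure.addHaar_real_closedBall _ _ (by linarith), finrank_euclideanSpace_fin]
        ring
    _ ≤ (K + 1) * R ^ 2 := by nlinarith [sq_nonneg R]
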